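/- arXiv:2212.05619 — 5 statements merged into one kernel-verified Lean document; each statement's English description precedes it below -/
import Mathlib

section
/- Let H be a bipartite graph with left vertex set of size k and right vertex set of size m, and let H also denote its ±1 adjacency matrix (the k×m matrix with entry 1 if the corresponding pair is an edge and −1 otherwise). Then every biclique (L, R) of H satisfies |L|·|R| ≤ ‖H‖₂². -/
/-- The spectral norm (largest singular value) of a real rectangular matrix, i.e. its
operator norm as a linear map between Euclidean spaces. -/
noncomputable def specNorm {a b : ℕ} (M : Matrix (Fin a) (Fin b) ℝ) : ℝ :=
  ‖LinearMap.toContinuousLinearMap (Matrix.toEuclideanLin M)‖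

/-- `(L, R)` is a biclique of the bipartite graph `H`. -/
def IsBiclique {k m : ℕ} (H : Fin k → Fin m → Bool) (L : Finset (Fin k))
    (R : Finset (Fin m)) : Prop :=
  ∀ u ∈ L, ∀ v ∈ R, H u v = true

/-- Every biclique `(L, R)` of a bipartite graph `H` with `±1` adjacency matrix `M`
satisfies `|L|·|R| ≤ ‖M‖₂²`. -/
theorem stmt_4 {k m : ℕ} (H : Fin k → Fin m → Bool)
    (L : Finset (Fin k)) (R : Finset (Fin m)) (hbic : IsBiclique H L R) :
    (L.card : ℝ) * R.card ≤
      (specNorm (Matrix.of fun i j => if H i j then (1 : ℝ) else -1)) ^ 2 := by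
  set M : Matrix (Fin k) (Fin m) ℝ :=
    Matrix.of fun i j => if H i j then (1 : ℝ) else -1 with hM
  set T := LinearMap.toContinuousLinearMap (Matrix.toEuclideanLin M) with hT
  let x : EuclideanSpace ℝ (Fin m) :=
    (WithLp.equiv 2 (Fin m → ℝ)).symm (fun j => if j ∈ R then (1 : ℝ) else 0)
  let y : EuclideanSpace ℝ (Fin k) :=
    (WithLp.equiv 2 (Fin k → ℝ)).symm (fun i => if i ∈ L then (1 : ℝ) else 0)
  have hxval : ∀ j, x j = if j ∈ R then (1:ℝ) else 0 := fun j => rfl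
  have hyval : ∀ i, y i = if i ∈ L then (1:ℝ) else 0 := fun i => rfl
  have hxnorm : ‖x‖ = Real.sqrt R.card := by
    rw [EuclideanSpace.norm_eq]
    congr 1
    rw [← Finset.sum_filter_add_sum_filter_not Finset.univ (· ∈ R)]
    simp [hxval, Finset.filter_mem_eq_inter, apply_ite (‖·‖), apply_ite (· ^ 2), Finset.filter_not, Finset.sdiff_inter_self]
  have hynorm : ‖y‖ = Real.sqrt L.card := by
    rw [EuclideanSpace.norm_eq]
    congr 1
    rw [← Finset.sum_filter_add_sum_filter_not Finset.univ (· ∈ L)]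
    simp [hyval, Finset.filter_mem_eq_inter, apply_ite (‖·‖), apply_ite (· ^ 2), Finset.filter_not, Finset.sdiff_inter_self]
  have hTx : T x = (WithLp.equiv 2 (Fin k → ℝ)).symm
      (Matrix.mulVec M (fun j => if j ∈ R then (1 : ℝ) else 0)) := by
    rw [hT, LinearMap.coe_toContinuousLinearMap']
    exact Matrix.toEuclideanLin_apply_piLp_toLp M _
  have hinner : (inner ℝ y (T x) : ℝ) = (L.card : ℝ) * R.card := by
    rw [hTx]
    rw [PiLp.inner_apply]
    have : ∀ i : Fin k, (inner ℝ (y i) (((WithLp.equiv 2 (Fin k → ℝ)).symm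
        (Matrix.mulVec M (fun j => if j ∈ R then (1 : ℝ) else 0))) i) : ℝ) =
        (if i ∈ L then (1:ℝ) else 0) * ∑ j, M i j * (if j ∈ R then (1:ℝ) else 0) := by
      intro i
      simp [y, Matrix.mulVec, dotProduct, RCLike.inner_apply]
    rw [Finset.sum_congr rfl fun i _ => this i]
    rw [← Finset.sum_filter_add_sum_filter_not Finset.univ (· ∈ L)]
    have h2 : ∀ i ∈ Finset.univ.filter (· ∈ L),
        (if i ∈ L then (1:ℝ) else 0) * ∑ j, M i j * (if j ∈ R then (1:ℝ) else 0)
        = (R.card : ℝ) := by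
      intro i hi
      simp only [Finset.mem_filter] at hi
      rw [if_pos hi.2, one_mul]
      rw [← Finset.sum_filter_add_sum_filter_not Finset.univ (· ∈ R)]
      have h3 : ∀ j ∈ Finset.univ.filter (· ∈ R),
          M i j * (if j ∈ R then (1:ℝ) else 0) = 1 := by
        intro j hj
        simp only [Finset.mem_filter] at hj
        rw [if_pos hj.2, mul_one, hM]
        simp [hbic i hi.2 j hj.2]
      rw [Finset.sum_congr rfl h3]
      simp [Finset.filter_mem_eq_inter, Finset.filter_not, Finset.sdiff_inter_self]
    rw [Finset.sum_congr rfl h2]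
    simp [Finset.filter_mem_eq_inter, Finset.filter_not, Finset.sdiff_inter_self]
  have hcauchy : (inner ℝ y (T x) : ℝ) ≤ ‖y‖ * ‖T x‖ := real_inner_le_norm y (T x)
  have hop : ‖T x‖ ≤ ‖T‖ * ‖x‖ := T.le_opNorm x
  have hTnn : (0:ℝ) ≤ ‖T‖ := norm_nonneg T
  have key : (L.card : ℝ) * R.card ≤ ‖T‖ * (Real.sqrt L.card * Real.sqrt R.card) := by
    rw [← hinner]
    calc (inner ℝ y (T x) : ℝ) ≤ ‖y‖ * ‖T x‖ := hcauchy
      _ ≤ ‖y‖ * (‖T‖ * ‖x‖) := by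
          exact mul_le_mul_of_nonneg_left hop (norm_nonneg y)
      _ = ‖T‖ * (‖y‖ * ‖x‖) := by ring
      _ = ‖T‖ * (Real.sqrt L.card * Real.sqrt R.card) := by rw [hxnorm, hynorm]
  have hc : Real.sqrt L.card * Real.sqrt R.card = Real.sqrt ((L.card : ℝ) * R.card) := by
    rw [Real.sqrt_mul (Nat.cast_nonneg _)]
  set c := Real.sqrt ((L.card : ℝ) * R.card) with hcc
  have hcsq : c ^ 2 = (L.card : ℝ) * R.card := Real.sq_sqrt (mul_nonneg (Nat.cast_nonneg _) (Nat.cast_nonneg _))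
  have hcnn : 0 ≤ c := Real.sqrt_nonneg _
  rw [hc] at key
  show (L.card : ℝ) * R.card ≤ ‖T‖ ^ 2
  nlinarith [sq_nonneg (‖T‖ - c)]
end

section
/- Let t ≥ 2 be an even integer and let H be a bipartite graph with left vertex set U, right vertex set V, and t-fold balancedness Δ. Let (L, R) be a biclique of H. For each S ⊆ L with |S| = t/2, let N_S ∈ {−1,1}^V be defined by N_S(j) = ∏_{i∈S} H(i,j) (where H(i,j) is the ±1 adjacency matrix), and let N_S⁻ be the restriction of N_S to the coordinates in V∖R. Then for all S, T ⊆ L with |S| = |T| = t/2 and S ≠ T, one has ⟨N_S⁻, N_T⁻⟩ ≤ Δ − |R|; in particular, if Δ < |R| then these vectors are pairwise negatively correlated. -/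
/-- `H` has `r`-fold balancedness `Δ`: for every nonempty `S ⊆ U` with `|S| ≤ r`,
the vector `u_S(j) = ∏_{i ∈ S} H(i,j)` (with `±1` entries) satisfies
`|∑_j u_S(j)| ≤ Δ`. -/
def FoldBalanced {k m : ℕ} (H : Fin k → Fin m → Bool) (r : ℕ) (Δ : ℝ) : Prop :=
  ∀ S : Finset (Fin k), S.Nonempty → S.card ≤ r →
    |∑ j : Fin m, ∏ i ∈ S, (if H i j then (1 : ℝ) else -1)| ≤ Δ

/-- If `H` has `t`-fold balancedness `Δ` (`t ≥ 2` even) and `(L, R)` is a biclique of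
`H`, then for distinct `S, T ⊆ L` of size `t/2`, the restrictions `N_S⁻, N_T⁻` of
`N_S, N_T` to `V \ R` satisfy `⟨N_S⁻, N_T⁻⟩ ≤ Δ - |R|`. -/
theorem stmt_5 {k m t : ℕ} (ht2 : 2 ≤ t) (hte : Even t) (Δ : ℝ)
    (H : Fin k → Fin m → Bool) (hbal : FoldBalanced H t Δ)
    (L : Finset (Fin k)) (R : Finset (Fin m)) (hbic : IsBiclique H L R)
    (S T : Finset (Fin k)) (hSL : S ⊆ L) (hTL : T ⊆ L)
    (hScard : S.card = t / 2) (hTcard : T.card = t / 2) (hST : S ≠ T) :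
    ∑ j ∈ Rᶜ, (∏ i ∈ S, (if H i j then (1 : ℝ) else -1)) *
        (∏ i ∈ T, (if H i j then (1 : ℝ) else -1))
      ≤ Δ - R.card := by
  set f : Fin k → Fin m → ℝ := fun i j => if H i j then (1 : ℝ) else -1 with hf
  set D := (S \ T) ∪ (T \ S) with hD
  -- product over S times product over T equals product over symmDiff
  have key : ∀ j, (∏ i ∈ S, f i j) * (∏ i ∈ T, f i j) = ∏ i ∈ D, f i j := by
    intro j
    have hS : S = (S \ T) ∪ (S ∩ T) := (Finset.sdiff_union_inter S T).symm
    have hT : T = (T \ S) ∪ (T ∩ S) := (Finset.sdiff_union_inter T S).symm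
    have h1 : ∏ i ∈ S, f i j = (∏ i ∈ S \ T, f i j) * ∏ i ∈ S ∩ T, f i j := by
      rw [← Finset.prod_union (Finset.disjoint_sdiff_inter S T), ← hS]
    have h2 : ∏ i ∈ T, f i j = (∏ i ∈ T \ S, f i j) * ∏ i ∈ T ∩ S, f i j := by
      rw [← Finset.prod_union (Finset.disjoint_sdiff_inter T S), ← hT]
    have h3 : ∏ i ∈ D, f i j = (∏ i ∈ S \ T, f i j) * ∏ i ∈ T \ S, f i j := by
      rw [hD, Finset.prod_union disjoint_sdiff_sdiff]
    have hsq : (∏ i ∈ S ∩ T, f i j) * ∏ i ∈ T ∩ S, f i j = 1 := by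
      rw [Finset.inter_comm T S, ← Finset.prod_mul_distrib]
      apply Finset.prod_eq_one
      intro i _
      simp only [hf]
      by_cases h : H i j <;> simp [h]
    rw [h1, h2, h3]
    calc (∏ i ∈ S \ T, f i j) * (∏ i ∈ S ∩ T, f i j) *
          ((∏ i ∈ T \ S, f i j) * ∏ i ∈ T ∩ S, f i j)
        = (∏ i ∈ S \ T, f i j) * (∏ i ∈ T \ S, f i j) *
          ((∏ i ∈ S ∩ T, f i j) * ∏ i ∈ T ∩ S, f i j) := by ring
      _ = _ := by rw [hsq, mul_one]
  have hDsub : D ⊆ L := by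
    intro i hi
    rcases Finset.mem_union.mp hi with h | h
    · exact hSL (Finset.mem_sdiff.mp h).1
    · exact hTL (Finset.mem_sdiff.mp h).1
  have hDne : D.Nonempty := by
    rw [Finset.nonempty_iff_ne_empty]
    intro h
    rw [hD, Finset.union_eq_empty] at h
    exact hST (Finset.Subset.antisymm
      (fun i hi => by_contra fun hn => absurd h.1 (Finset.nonempty_iff_ne_empty.mp ⟨i, Finset.mem_sdiff.mpr ⟨hi, hn⟩⟩))
      (fun i hi => by_contra fun hn => absurd h.2 (Finset.nonempty_iff_ne_empty.mp ⟨i, Finset.mem_sdiff.mpr ⟨hi, hn⟩⟩)))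
  have hDcard : D.card ≤ t := by
    calc D.card ≤ (S ∪ T).card := Finset.card_le_card (by
            intro i hi
            rcases Finset.mem_union.mp hi with h | h
            · exact Finset.mem_union_left _ (Finset.mem_sdiff.mp h).1
            · exact Finset.mem_union_right _ (Finset.mem_sdiff.mp h).1)
      _ ≤ S.card + T.card := Finset.card_union_le S T
      _ ≤ t := by
          obtain ⟨s, hs⟩ := hte
          omega
  -- sum over R is exactly |R|
  have hsumR : ∑ j ∈ R, ∏ i ∈ D, f i j = (R.card : ℝ) := by
    rw [Finset.sum_congr rfl (fun j hj => ?_), Finset.sum_const, nsmul_eq_mul, mul_one]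
    apply Finset.prod_eq_one
    intro i hi
    simp only [hf]
    rw [hbic i (hDsub hi) j hj]
    simp
  have hsplit : ∑ j : Fin m, ∏ i ∈ D, f i j
      = (∑ j ∈ R, ∏ i ∈ D, f i j) + ∑ j ∈ Rᶜ, ∏ i ∈ D, f i j := by
    rw [← Finset.sum_union (disjoint_compl_right), Finset.union_compl]
  have hbound := hbal D hDne hDcard
  rw [abs_le] at hbound
  have : ∑ j ∈ Rᶜ, (∏ i ∈ S, f i j) * (∏ i ∈ T, f i j)
      = ∑ j ∈ Rᶜ, ∏ i ∈ D, f i j := Finset.sum_congr rfl (fun j _ => key j)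
  rw [this]
  have := hbound.2
  rw [hsplit, hsumR] at this
  linarith
end

section
/- Let r ≥ 1 and let H be a bipartite graph with left vertex set U of size k, right vertex set V of size m, and 2r-fold balancedness Δ. Let (L, R) be a biclique of H and let e = C(|L|, r) be the number of r-element subsets of L. Then e²·|R| ≤ m·e + Δ·e². -/
/-- If `H` is a bipartite graph (left size `k`, right size `m`) with `2r`-fold
balancedness `Δ` and `(L, R)` is a biclique of `H`, then with `e = C(|L|, r)` one has
`e²·|R| ≤ m·e + Δ·e²`. -/
theorem stmt_9 {k m r : ℕ} (hr : 1 ≤ r) (H : Fin k → Fin m → Bool) (Δ : ℝ)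
    (hbal : FoldBalanced H (2 * r) Δ)
    (L : Finset (Fin k)) (R : Finset (Fin m)) (hbic : IsBiclique H L R) :
    ((L.card.choose r : ℝ)) ^ 2 * R.card
      ≤ (m : ℝ) * (L.card.choose r) + Δ * (L.card.choose r : ℝ) ^ 2 := by
  classical
  set ε : Fin k → Fin m → ℝ := fun i j => if H i j then (1:ℝ) else -1 with hεdef
  by_cases he : L.card.choose r = 0
  · simp [he]
  have hrL : r ≤ L.card := by
    by_contra h
    exact he (Nat.choose_eq_zero_of_lt (not_le.mp h))
  have hL : L.Nonempty := Finset.card_pos.mp (lt_of_lt_of_le hr hrL)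
  have hΔ : 0 ≤ Δ := by
    obtain ⟨i, hi⟩ := hL
    have h1 := hbal {i} (Finset.singleton_nonempty i)
      (by rw [Finset.card_singleton]; omega)
    exact le_trans (abs_nonneg _) h1
  set 𝒮 := L.powersetCard r with h𝒮
  have hcard : 𝒮.card = L.card.choose r := Finset.card_powersetCard r L
  set e : ℝ := (L.card.choose r : ℝ) with hedef
  -- squares of ±1 products are 1
  have hsq : ∀ (A : Finset (Fin k)) (j : Fin m),
      (∏ i ∈ A, ε i j) * (∏ i ∈ A, ε i j) = 1 := by
    intro A j
    rw [← Finset.prod_mul_distrib]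
    apply Finset.prod_eq_one
    intro i _
    by_cases h : H i j <;> simp [hεdef, h]
  -- product over S times product over T equals product over symmetric difference
  have hprod : ∀ (S T : Finset (Fin k)) (j : Fin m),
      (∏ i ∈ S, ε i j) * (∏ i ∈ T, ε i j) = ∏ i ∈ symmDiff S T, ε i j := by
    intro S T j
    have hd : Disjoint (symmDiff S T) (S ∩ T) := by
      simpa [Finset.inf_eq_inter] using (disjoint_symmDiff_inf S T)
    have hu : symmDiff S T ∪ (S ∩ T) = S ∪ T := by
      simpa [Finset.sup_eq_union, Finset.inf_eq_inter] using (symmDiff_sup_inf S T)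
    have h1 : (∏ i ∈ S, ε i j) * (∏ i ∈ T, ε i j)
        = (∏ i ∈ S ∪ T, ε i j) * (∏ i ∈ S ∩ T, ε i j) :=
      (Finset.prod_union_inter).symm
    rw [h1, ← hu, Finset.prod_union hd, mul_assoc, hsq, mul_one]
  -- on R, each summand is 1
  have hR : ∀ j ∈ R, (∑ S ∈ 𝒮, ∏ i ∈ S, ε i j) = e := by
    intro j hj
    rw [hedef, ← hcard]
    rw [Finset.card_eq_sum_ones 𝒮, Nat.cast_sum]
    apply Finset.sum_congr rfl
    intro S hS
    have hSL : S ⊆ L := (Finset.mem_powersetCard.mp hS).1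
    simp only [Nat.cast_one]
    apply Finset.prod_eq_one
    intro i hi
    have := hbic i (hSL hi) j hj
    simp [hεdef, this]
  -- lower bound by sum of squares
  have step1 : e ^ 2 * R.card ≤ ∑ j : Fin m, (∑ S ∈ 𝒮, ∏ i ∈ S, ε i j) ^ 2 := by
    have h1 : ∑ j ∈ R, (∑ S ∈ 𝒮, ∏ i ∈ S, ε i j) ^ 2 = e ^ 2 * R.card := by
      rw [Finset.sum_congr rfl (fun j hj => by rw [hR j hj])]
      rw [Finset.sum_const, nsmul_eq_mul, mul_comm]
    rw [← h1]
    apply Finset.sum_le_sum_of_subset_of_nonneg (Finset.subset_univ R)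
    intro j _ _
    positivity
  -- expand the square
  have step2 : ∑ j : Fin m, (∑ S ∈ 𝒮, ∏ i ∈ S, ε i j) ^ 2
      = ∑ S ∈ 𝒮, ∑ T ∈ 𝒮, ∑ j : Fin m, ∏ i ∈ symmDiff S T, ε i j := by
    have : ∀ j : Fin m, (∑ S ∈ 𝒮, ∏ i ∈ S, ε i j) ^ 2
        = ∑ S ∈ 𝒮, ∑ T ∈ 𝒮, ∏ i ∈ symmDiff S T, ε i j := by
      intro j
      rw [sq, Finset.sum_mul_sum]
      exact Finset.sum_congr rfl fun S _ => Finset.sum_congr rfl fun T _ => hprod S T j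
    rw [Finset.sum_congr rfl fun j _ => this j]
    rw [Finset.sum_comm]
    apply Finset.sum_congr rfl
    intro S _
    rw [Finset.sum_comm]
  -- bound each term
  have key : ∀ S ∈ 𝒮, ∀ T ∈ 𝒮,
      (∑ j : Fin m, ∏ i ∈ symmDiff S T, ε i j)
        ≤ (if S = T then (m:ℝ) else 0) + Δ := by
    intro S hS T hT
    have hcS : S.card = r := (Finset.mem_powersetCard.mp hS).2
    have hcT : T.card = r := (Finset.mem_powersetCard.mp hT).2
    by_cases h : S = T
    · subst h
      simp only [if_pos rfl, symmDiff_self]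
      have : (⊥ : Finset (Fin k)) = (∅ : Finset (Fin k)) := rfl
      rw [this]
      simp only [Finset.prod_empty, Finset.sum_const, Finset.card_univ,
        Fintype.card_fin, nsmul_eq_mul, mul_one]
      rw [if_pos trivial]
      linarith
    · simp only [if_neg h, zero_add]
      have hne : (symmDiff S T).Nonempty := by
        rw [Finset.nonempty_iff_ne_empty]
        intro hc
        exact h (symmDiff_eq_bot.mp hc)
      have hcard2 : (symmDiff S T).card ≤ 2 * r := by
        have h1 : symmDiff S T ⊆ S ∪ T := by
          simpa [Finset.sup_eq_union] using (symmDiff_le_sup (a := S) (b := T))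
        calc (symmDiff S T).card ≤ (S ∪ T).card := Finset.card_le_card h1
          _ ≤ S.card + T.card := Finset.card_union_le S T
          _ = 2 * r := by omega
      have := hbal (symmDiff S T) hne hcard2
      exact le_trans (le_abs_self _) this
  -- put it together
  have step3 : ∑ S ∈ 𝒮, ∑ T ∈ 𝒮, ∑ j : Fin m, ∏ i ∈ symmDiff S T, ε i j
      ≤ (m : ℝ) * e + Δ * e ^ 2 := by
    calc ∑ S ∈ 𝒮, ∑ T ∈ 𝒮, ∑ j : Fin m, ∏ i ∈ symmDiff S T, ε i j
        ≤ ∑ S ∈ 𝒮, ∑ T ∈ 𝒮, ((if S = T then (m:ℝ) else 0) + Δ) := by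
          apply Finset.sum_le_sum
          intro S hS
          apply Finset.sum_le_sum
          intro T hT
          exact key S hS T hT
      _ = ∑ _S ∈ 𝒮, ((m : ℝ) + 𝒮.card * Δ) := by
          apply Finset.sum_congr rfl
          intro S hS
          rw [Finset.sum_add_distrib, Finset.sum_ite_eq 𝒮 S (fun _ => (m:ℝ)),
            if_pos hS, Finset.sum_const, nsmul_eq_mul]
      _ = (m : ℝ) * e + Δ * e ^ 2 := by
          rw [Finset.sum_const, nsmul_eq_mul, hcard, ← hedef]
          ring
  calc e ^ 2 * R.card ≤ ∑ j : Fin m, (∑ S ∈ 𝒮, ∏ i ∈ S, ε i j) ^ 2 := step1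
    _ = ∑ S ∈ 𝒮, ∑ T ∈ 𝒮, ∑ j : Fin m, ∏ i ∈ symmDiff S T, ε i j := step2
    _ ≤ (m : ℝ) * e + Δ * e ^ 2 := step3
end

section
/- Let r ≥ 1 and let H be a bipartite graph with left vertex set U of size k and right vertex set V of size m, having 2r-fold balancedness Δ₂ᵣ and such that every right vertex has degree at most k/2 + Δ_ℓ. Suppose k/2 − Δ_ℓ − Δ₂ᵣ ≥ k/4, and set n = k + m. Then every biclique (L, R) of H with R nonempty and |L| + |R| = k satisfies C(|L|, r)⁴ · |R| ≤ n · (4n/k)⁴. -/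
/-- Suppose `H` (left size `k`, right size `m`) has `2r`-fold balancedness `Δ₂ᵣ`, every
right vertex has degree at most `k/2 + Δₗ`, and `k/2 − Δₗ − Δ₂ᵣ ≥ k/4`. Setting
`n = k + m`, every biclique `(L, R)` of `H` with `R` nonempty and `|L| + |R| = k`
satisfies `C(|L|, r)⁴·|R| ≤ n·(4n/k)⁴`. -/
theorem stmt_11 {k m r : ℕ} (hr : 1 ≤ r) (H : Fin k → Fin m → Bool)
    (Δ₂ᵣ Δₗ : ℝ) (hbal : FoldBalanced H (2 * r) Δ₂ᵣ)
    (hdeg : ∀ v : Fin m,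
      ((Finset.univ.filter fun u : Fin k => H u v = true).card : ℝ) ≤ (k : ℝ) / 2 + Δₗ)
    (hgap : (k : ℝ) / 2 - Δₗ - Δ₂ᵣ ≥ (k : ℝ) / 4)
    (L : Finset (Fin k)) (R : Finset (Fin m)) (hbic : IsBiclique H L R)
    (hR : R.Nonempty) (hsum : L.card + R.card = k) :
    ((L.card.choose r : ℝ)) ^ 4 * R.card
      ≤ ((k : ℝ) + m) * (4 * ((k : ℝ) + m) / k) ^ 4 := by
  classical
  have hk : 0 < k := by
    have := hR.card_pos
    omega
  have hk' : (0:ℝ) < k := by exact_mod_cast hk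
  -- Δ₂ᵣ is nonnegative
  have hΔ : 0 ≤ Δ₂ᵣ := by
    have i : Fin k := ⟨0, hk⟩
    have := hbal {i} (Finset.singleton_nonempty i) (by simp; omega)
    exact le_trans (abs_nonneg _) this
  set x : Fin k → Fin m → ℝ := fun i j => if H i j then 1 else -1 with hxdef
  have hx1 : ∀ i j, x i j * x i j = 1 := by
    intro i j
    simp only [hxdef]
    split <;> norm_num
  have hprodsq : ∀ (T : Finset (Fin k)) (j : Fin m),
      (∏ i ∈ T, x i j) * (∏ i ∈ T, x i j) = 1 := by
    intro T j
    rw [← Finset.prod_mul_distrib]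
    exact Finset.prod_eq_one fun i _ => hx1 i j
  have hmerge : ∀ (S S' : Finset (Fin k)) (j : Fin m),
      (∏ i ∈ S, x i j) * (∏ i ∈ S', x i j)
        = ∏ i ∈ (S \ S') ∪ (S' \ S), x i j := by
    intro S S' j
    have hdis : Disjoint (S \ S') (S' \ S) := disjoint_sdiff_sdiff
    rw [Finset.prod_union hdis]
    have h1 : (∏ i ∈ S \ (S ∩ S'), x i j) * ∏ i ∈ S ∩ S', x i j = ∏ i ∈ S, x i j :=
      Finset.prod_sdiff Finset.inter_subset_left
    have h2 : (∏ i ∈ S' \ (S ∩ S'), x i j) * ∏ i ∈ S ∩ S', x i j = ∏ i ∈ S', x i j :=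
      Finset.prod_sdiff Finset.inter_subset_right
    have e1 : S \ (S ∩ S') = S \ S' := by
      ext a; simp only [Finset.mem_sdiff, Finset.mem_inter]; tauto
    have e2 : S' \ (S ∩ S') = S' \ S := by
      ext a; simp only [Finset.mem_sdiff, Finset.mem_inter]; tauto
    rw [e1] at h1; rw [e2] at h2
    calc (∏ i ∈ S, x i j) * (∏ i ∈ S', x i j)
        = ((∏ i ∈ S \ S', x i j) * (∏ i ∈ S' \ S, x i j))
          * ((∏ i ∈ S ∩ S', x i j) * (∏ i ∈ S ∩ S', x i j)) := by
          rw [← h1, ← h2]; ring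
      _ = (∏ i ∈ S \ S', x i j) * (∏ i ∈ S' \ S, x i j) := by
          rw [hprodsq]; ring
  set P := Finset.powersetCard r L with hP
  have hPcard : P.card = L.card.choose r := Finset.card_powersetCard r L
  set C : ℝ := (L.card.choose r : ℝ) with hC
  by_cases hrl : L.card < r
  · have h0 : L.card.choose r = 0 := Nat.choose_eq_zero_of_lt hrl
    have hC0 : C = 0 := by rw [hC, h0]; norm_num
    rw [hC0]
    have : (0:ℝ) ≤ ((k:ℝ) + m) * (4 * ((k:ℝ) + m) / k) ^ 4 := by positivity
    simpa using this
  · push_neg at hrl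
    have hC1 : (1:ℝ) ≤ C := by
      rw [hC]
      exact_mod_cast Nat.one_le_iff_ne_zero.mpr (Nat.choose_pos hrl).ne'
    have hC0 : (0:ℝ) ≤ C := le_trans zero_le_one hC1
    have hCpos : (0:ℝ) < C := lt_of_lt_of_le zero_lt_one hC1
    have hPC : (P.card : ℝ) = C := by rw [hPcard, hC]
    -- lower bound on F
    have hF_lower : (R.card : ℝ) * C ^ 2
        ≤ ∑ j : Fin m, (∑ S ∈ P, ∏ i ∈ S, x i j) ^ 2 := by
      have hjR : ∀ j ∈ R, (∑ S ∈ P, ∏ i ∈ S, x i j) = C := by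
        intro j hj
        have : ∀ S ∈ P, (∏ i ∈ S, x i j) = 1 := by
          intro S hS
          refine Finset.prod_eq_one fun i hi => ?_
          have hiL : i ∈ L := (Finset.mem_powersetCard.mp hS).1 hi
          simp [hxdef, hbic i hiL j hj]
        rw [Finset.sum_congr rfl this, Finset.sum_const, nsmul_eq_mul, mul_one, hPC]
      calc (R.card:ℝ) * C ^ 2 = ∑ j ∈ R, (∑ S ∈ P, ∏ i ∈ S, x i j) ^ 2 := by
            rw [Finset.sum_congr rfl (fun j hj => by rw [hjR j hj]),
              Finset.sum_const, nsmul_eq_mul]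
        _ ≤ ∑ j : Fin m, (∑ S ∈ P, ∏ i ∈ S, x i j) ^ 2 :=
            Finset.sum_le_sum_of_subset_of_nonneg (Finset.subset_univ R)
              (fun j _ _ => sq_nonneg _)
    -- upper bound on F
    have hterm : ∀ S ∈ P, ∀ S' ∈ P,
        (∑ j : Fin m, ∏ i ∈ (S \ S') ∪ (S' \ S), x i j)
          ≤ if S = S' then (m:ℝ) else Δ₂ᵣ := by
      intro S hS S' hS'
      by_cases h : S = S'
      · subst h
        simp
      · simp only [if_neg h]
        have hSc : S.card = r := (Finset.mem_powersetCard.mp hS).2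
        have hS'c : S'.card = r := (Finset.mem_powersetCard.mp hS').2
        have hne : (S \ S').Nonempty := by
          rw [Finset.sdiff_nonempty]
          intro hsub
          exact h (Finset.eq_of_subset_of_card_le hsub (by omega))
        obtain ⟨a, ha⟩ := hne
        have hne' : ((S \ S') ∪ (S' \ S)).Nonempty := ⟨a, Finset.mem_union_left _ ha⟩
        have hcard : ((S \ S') ∪ (S' \ S)).card ≤ 2 * r := by
          have := Finset.card_union_le (S \ S') (S' \ S)
          have h1 : (S \ S').card ≤ r := hSc ▸ Finset.card_le_card Finset.sdiff_subset
          have h2 : (S' \ S).card ≤ r := hS'c ▸ Finset.card_le_card Finset.sdiff_subset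
          omega
        exact le_trans (le_abs_self _) (hbal _ hne' hcard)
    have hF_upper : ∑ j : Fin m, (∑ S ∈ P, ∏ i ∈ S, x i j) ^ 2
        ≤ C * ((m:ℝ) + C * Δ₂ᵣ) := by
      calc ∑ j : Fin m, (∑ S ∈ P, ∏ i ∈ S, x i j) ^ 2
          = ∑ j : Fin m, ∑ S ∈ P, ∑ S' ∈ P, ∏ i ∈ (S \ S') ∪ (S' \ S), x i j := by
            refine Finset.sum_congr rfl fun j _ => ?_
            rw [sq, Finset.sum_mul_sum]
            exact Finset.sum_congr rfl fun S _ =>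
              Finset.sum_congr rfl fun S' _ => hmerge S S' j
        _ = ∑ S ∈ P, ∑ S' ∈ P, ∑ j : Fin m, ∏ i ∈ (S \ S') ∪ (S' \ S), x i j := by
            rw [Finset.sum_comm]
            exact Finset.sum_congr rfl fun S _ => Finset.sum_comm
        _ ≤ ∑ S ∈ P, ∑ S' ∈ P, (if S = S' then (m:ℝ) else Δ₂ᵣ) :=
            Finset.sum_le_sum fun S hS =>
              Finset.sum_le_sum fun S' hS' => hterm S hS S' hS'
        _ ≤ ∑ S ∈ P, ((m:ℝ) + C * Δ₂ᵣ) := by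
            refine Finset.sum_le_sum fun S hS => ?_
            have he : ∑ S' ∈ P, (if S = S' then (m:ℝ) else Δ₂ᵣ)
                = ∑ S' ∈ P, (Δ₂ᵣ + if S = S' then (m:ℝ) - Δ₂ᵣ else 0) := by
              refine Finset.sum_congr rfl fun S' _ => ?_
              split <;> ring
            rw [he, Finset.sum_add_distrib, Finset.sum_ite_eq, if_pos hS,
              Finset.sum_const, nsmul_eq_mul, hPC]
            nlinarith [hΔ, hC1]
        _ = C * ((m:ℝ) + C * Δ₂ᵣ) := by
            rw [Finset.sum_const, nsmul_eq_mul, hPC]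
    have key : (R.card : ℝ) * C ≤ (m:ℝ) + C * Δ₂ᵣ := by
      refine le_of_mul_le_mul_left ?_ hCpos
      calc C * ((R.card:ℝ) * C) = (R.card:ℝ) * C ^ 2 := by ring
        _ ≤ C * ((m:ℝ) + C * Δ₂ᵣ) := le_trans hF_lower hF_upper
    -- degree bound
    obtain ⟨v, hv⟩ := hR
    have hLsub : L ⊆ Finset.univ.filter fun u : Fin k => H u v = true :=
      fun u hu => Finset.mem_filter.mpr ⟨Finset.mem_univ u, hbic u hu v hv⟩
    have hLdeg : (L.card : ℝ) ≤ (k:ℝ)/2 + Δₗ :=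
      le_trans (by exact_mod_cast Finset.card_le_card hLsub) (hdeg v)
    have hcast : (L.card : ℝ) + (R.card : ℝ) = k := by exact_mod_cast hsum
    have hRlow : (k:ℝ)/2 - Δₗ ≤ (R.card : ℝ) := by linarith
    have hRgap : (k:ℝ)/4 ≤ (R.card : ℝ) - Δ₂ᵣ := by linarith
    have hCm : C * ((k:ℝ)/4) ≤ m := by nlinarith [key, hRgap, hCpos]
    have hCB : C ≤ 4 * ((k:ℝ) + m) / k := by
      rw [le_div_iff₀ hk']
      nlinarith [hCm, hk']
    have hm0 : (0:ℝ) ≤ m := by positivity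
    have hRn : (R.card : ℝ) ≤ (k:ℝ) + m := by
      have : (R.card : ℝ) ≤ k := by linarith [hcast, Nat.cast_nonneg (α := ℝ) L.card]
      linarith
    calc C ^ 4 * (R.card : ℝ)
        ≤ (4 * ((k:ℝ) + m) / k) ^ 4 * ((k:ℝ) + m) :=
          mul_le_mul (pow_le_pow_left₀ hC0 hCB 4) hRn (Nat.cast_nonneg _) (by positivity)
      _ = ((k:ℝ) + m) * (4 * ((k:ℝ) + m) / k) ^ 4 := by ring
end

section
/- Let 0 < p < 1 and let H be a bipartite graph with left vertex set of size k and right vertex set of size m. Let H_p be the k×m matrix with entry √((1−p)/p) at (i,j) if {i,j} is an edge of H and −√(p/(1−p)) otherwise. Then every biclique (L, R) of H satisfies |L|·|R| ≤ (p/(1−p))·‖H_p‖₂². -/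
private lemma aux_13 (p c s N : ℝ) (hp0 : 0 < p) (h1p : 0 < 1 - p)
    (hc : c = Real.sqrt ((1 - p) / p)) (hNnn : 0 ≤ N) (hs : 0 ≤ s)
    (hb : c * N ≤ s * Real.sqrt N) : N ≤ p / (1 - p) * s ^ 2 := by
  have hcpos : 0 < c := hc ▸ Real.sqrt_pos.2 (div_pos h1p hp0)
  rcases eq_or_lt_of_le hNnn with h0 | hNpos
  · rw [← h0]; positivity
  · have hsN : 0 < Real.sqrt N := Real.sqrt_pos.2 hNpos
    have hq : Real.sqrt N * Real.sqrt N = N := Real.mul_self_sqrt hNnn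
    have h2 : c * Real.sqrt N ≤ s := by nlinarith
    have h3 : c ^ 2 * N ≤ s ^ 2 := by nlinarith
    have hc2 : c ^ 2 = (1 - p) / p := hc ▸ Real.sq_sqrt (le_of_lt (div_pos h1p hp0))
    rw [hc2] at h3
    have h4 : (1 - p) * N ≤ p * s ^ 2 := by
      rw [div_mul_eq_mul_div, div_le_iff₀ hp0] at h3; nlinarith
    rw [div_mul_eq_mul_div, le_div_iff₀ h1p]
    nlinarith

/-- Let `H_p` be the `p`-biased character matrix of a bipartite graph `H`, i.e.
`H_p(i,j) = √((1−p)/p)` if `{i,j}` is an edge and `−√(p/(1−p))` otherwise. Then every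
biclique `(L, R)` of `H` satisfies `|L|·|R| ≤ (p/(1−p))·‖H_p‖₂²`. -/
theorem stmt_13 {k m : ℕ} (p : ℝ) (hp0 : 0 < p) (hp1 : p < 1)
    (H : Fin k → Fin m → Bool)
    (L : Finset (Fin k)) (R : Finset (Fin m)) (hbic : IsBiclique H L R) :
    (L.card : ℝ) * R.card ≤
      (p / (1 - p)) *
        (specNorm (Matrix.of fun i j =>
          if H i j then Real.sqrt ((1 - p) / p) else -Real.sqrt (p / (1 - p)))) ^ 2 := by
  have h1p : 0 < 1 - p := by linarith
  set c : ℝ := Real.sqrt ((1 - p) / p) with hc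
  set M : Matrix (Fin k) (Fin m) ℝ := Matrix.of fun i j =>
    if H i j then Real.sqrt ((1 - p) / p) else -Real.sqrt (p / (1 - p)) with hM
  set T := LinearMap.toContinuousLinearMap (Matrix.toEuclideanLin M) with hT
  have hTnn : (0:ℝ) ≤ specNorm M := norm_nonneg _
  set x : EuclideanSpace ℝ (Fin k) :=
    (WithLp.equiv 2 _).symm (fun i => if i ∈ L then (1:ℝ) else 0) with hx
  set y : EuclideanSpace ℝ (Fin m) :=
    (WithLp.equiv 2 _).symm (fun j => if j ∈ R then (1:ℝ) else 0) with hy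
  have hxnorm : ‖x‖ = Real.sqrt L.card := by
    rw [EuclideanSpace.norm_eq]
    congr 1
    have h1 : ∀ i : Fin k, ‖x i‖ ^ 2 = (if i ∈ L then (1:ℝ) else 0) := by
      intro i; by_cases h : i ∈ L <;> simp [hx, h, WithLp.equiv_symm_apply, PiLp.toLp_apply]
    rw [Finset.sum_congr rfl fun i _ => h1 i]
    simp
  have hynorm : ‖y‖ = Real.sqrt R.card := by
    rw [EuclideanSpace.norm_eq]
    congr 1
    have h1 : ∀ j : Fin m, ‖y j‖ ^ 2 = (if j ∈ R then (1:ℝ) else 0) := by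
      intro j; by_cases h : j ∈ R <;> simp [hy, h, WithLp.equiv_symm_apply, PiLp.toLp_apply]
    rw [Finset.sum_congr rfl fun j _ => h1 j]
    simp
  have hinner : (inner ℝ x (T y) : ℝ) = c * (L.card * R.card) := by
    rw [PiLp.inner_apply]
    have hTy : ∀ i, T y i = ∑ j, M i j * (if j ∈ R then (1:ℝ) else 0) := by
      intro i
      show Matrix.toEuclideanLin M y i = _
      rw [Matrix.toEuclideanLin_apply]
      rfl
    simp only [RCLike.inner_apply, conj_trivial, hTy]
    have hxi : ∀ i : Fin k, x i = if i ∈ L then (1:ℝ) else 0 := fun i => rfl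
    have step1 : ∀ i : Fin k, x i *
        (∑ j, M i j * (if j ∈ R then (1:ℝ) else 0)) =
        ∑ j, if i ∈ L ∧ j ∈ R then M i j else 0 := by
      intro i
      rw [hxi, Finset.mul_sum]
      refine Finset.sum_congr rfl fun j _ => ?_
      by_cases hi : i ∈ L <;> by_cases hj : j ∈ R <;> simp [hi, hj]
    rw [Finset.sum_congr rfl fun i _ => (mul_comm _ _).trans (step1 i)]
    have step2 : (∑ i : Fin k, ∑ j : Fin m, if i ∈ L ∧ j ∈ R then M i j else 0)
        = ∑ i ∈ L, ∑ j ∈ R, M i j := by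
      rw [← Finset.sum_subset (Finset.subset_univ L)]
      · refine Finset.sum_congr rfl fun i hi => ?_
        rw [← Finset.sum_subset (Finset.subset_univ R)]
        · exact Finset.sum_congr rfl fun j hj => by simp [hi, hj]
        · intro j _ hj; simp [hj]
      · intro i _ hi; simp [hi]
    rw [step2]
    have step3 : ∀ i ∈ L, ∀ j ∈ R, M i j = c := by
      intro i hi j hj
      simp [hM, hbic i hi j hj, hc]
    rw [Finset.sum_congr rfl fun i hi => Finset.sum_congr rfl fun j hj => step3 i hi j hj]
    simp [Finset.sum_const, mul_comm, mul_assoc, mul_left_comm]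
  have hbound : (inner ℝ x (T y) : ℝ) ≤ ‖x‖ * (specNorm M * ‖y‖) := by
    calc (inner ℝ x (T y) : ℝ) ≤ ‖x‖ * ‖T y‖ := real_inner_le_norm x (T y)
    _ ≤ ‖x‖ * (specNorm M * ‖y‖) := by
        apply mul_le_mul_of_nonneg_left (T.le_opNorm y) (norm_nonneg x)
  rw [hinner, hxnorm, hynorm] at hbound
  have hNnn : (0:ℝ) ≤ (L.card : ℝ) * R.card := by positivity
  have hsqrt : Real.sqrt L.card * (specNorm M * Real.sqrt R.card)
      = specNorm M * Real.sqrt ((L.card : ℝ) * R.card) := by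
    rw [Real.sqrt_mul (Nat.cast_nonneg _)]; ring
  rw [hsqrt] at hbound
  exact aux_13 p c (specNorm M) ((L.card : ℝ) * R.card) hp0 h1p hc hNnn hTnn hbound
end
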